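/- arXiv:1511.09258 — 3 statements merged into one kernel-verified Lean document; each statement's English description precedes it below -/
import Mathlib

section
/- Let (M, Ω) be a symplectic manifold, ∇ a torsion-free affine connection with ∇Ω = 0, and X a vector field with L_X∇ = 0. Then the 2-form dX^♭ is ∇-parallel: ∇(dX^♭) = 0, where X^♭ = Ω(X, ·). -/
/-!
Statement 5: Let `(M, Ω)` be a symplectic manifold, `∇` a torsion-free affine connection
with `∇Ω = 0`, and `X` a vector field with `L_X ∇ = 0`.  Then the 2-form `d X^♭` is
`∇`-parallel, where `X^♭ = Ω(X, ·)`.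

The 2-form `dX^♭` is given on vector fields by the invariant formula
`dX^♭(Y,Z) = Y(X^♭(Z)) − Z(X^♭(Y)) − X^♭([Y,Z])`, and `∇ (dX^♭) = 0` means
`W(dX^♭(Y,Z)) − dX^♭(∇_W Y, Z) − dX^♭(Y, ∇_W Z) = 0` for all vector fields `W, Y, Z`.
-/

open scoped Manifold

section

variable (E : Type*) [NormedAddCommGroup E] [NormedSpace ℝ E]
  (M : Type*) [TopologicalSpace M] [ChartedSpace E M]
  [IsManifold 𝓘(ℝ, E) ((⊤ : ℕ∞) : WithTop ℕ∞) M]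

/-- A vector field `V : M → E` is smooth if the corresponding section of the tangent
bundle is smooth. -/
def IsSmoothVF (V : M → E) : Prop :=
  ContMDiff 𝓘(ℝ, E) 𝓘(ℝ, E).tangent (⊤ : ℕ∞)
    (fun x => (⟨x, V x⟩ : TangentBundle 𝓘(ℝ, E) M))

/-- A function `f : M → ℝ` is smooth. -/
def IsSmoothF (f : M → ℝ) : Prop := ContMDiff 𝓘(ℝ, E) 𝓘(ℝ, ℝ) (⊤ : ℕ∞) f

variable {E M}

/-- The action of a vector field on a function by directional derivative. -/
noncomputable def vact (V : M → E) (f : M → ℝ) : M → ℝ :=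
  fun x => mfderiv 𝓘(ℝ, E) 𝓘(ℝ, ℝ) f x (V x)

/-- `lie` is the Lie bracket operation on vector fields: it sends smooth vector fields to
smooth vector fields and satisfies `[X,Y] f = X (Y f) - Y (X f)` on smooth functions. -/
def IsLieBracketOp (lie : (M → E) → (M → E) → (M → E)) : Prop :=
  ∀ X Y, IsSmoothVF E M X → IsSmoothVF E M Y →
    IsSmoothVF E M (lie X Y) ∧
      ∀ f, IsSmoothF E M f → vact (lie X Y) f = vact X (vact Y f) - vact Y (vact X f)

/-- `∇` is an affine connection (covariant derivative operator) on vector fields. -/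
structure IsConnection (nabla : (M → E) → (M → E) → (M → E)) : Prop where
  smooth : ∀ X Y, IsSmoothVF E M X → IsSmoothVF E M Y → IsSmoothVF E M (nabla X Y)
  addLeft : ∀ X X' Y, IsSmoothVF E M X → IsSmoothVF E M X' → IsSmoothVF E M Y →
    nabla (X + X') Y = nabla X Y + nabla X' Y
  smulLeft : ∀ (f : M → ℝ) X Y, IsSmoothF E M f → IsSmoothVF E M X → IsSmoothVF E M Y →
    nabla (fun x => f x • X x) Y = fun x => f x • nabla X Y x
  addRight : ∀ X Y Y', IsSmoothVF E M X → IsSmoothVF E M Y → IsSmoothVF E M Y' →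
    nabla X (Y + Y') = nabla X Y + nabla X Y'
  leibniz : ∀ (f : M → ℝ) X Y, IsSmoothF E M f → IsSmoothVF E M X → IsSmoothVF E M Y →
    nabla X (fun x => f x • Y x) = fun x => vact X f x • Y x + f x • nabla X Y x

/-- `∇` is torsion-free: `∇_X Y - ∇_Y X = [X, Y]`. -/
def IsTorsionFree (lie nabla : (M → E) → (M → E) → (M → E)) : Prop :=
  ∀ X Y, IsSmoothVF E M X → IsSmoothVF E M Y → nabla X Y - nabla Y X = lie X Y

/-- `Ω` is a symplectic form: a smooth, antisymmetric, (pointwise) nondegenerate, closed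
2-form.  Closedness is expressed by the invariant formula for the exterior derivative. -/
structure IsSymplecticForm (lie : (M → E) → (M → E) → (M → E))
    (Ω : M → (E →ₗ[ℝ] E →ₗ[ℝ] ℝ)) : Prop where
  smooth : ∀ Y Z, IsSmoothVF E M Y → IsSmoothVF E M Z →
    IsSmoothF E M (fun x => Ω x (Y x) (Z x))
  antisymm : ∀ (x : M) (u v : E), Ω x u v = - Ω x v u
  nondeg : ∀ (x : M) (u : E), (∀ v : E, Ω x u v = 0) → u = 0
  closed : ∀ X Y Z, IsSmoothVF E M X → IsSmoothVF E M Y → IsSmoothVF E M Z → ∀ x : M,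
    vact X (fun p => Ω p (Y p) (Z p)) x - vact Y (fun p => Ω p (X p) (Z p)) x
      + vact Z (fun p => Ω p (X p) (Y p)) x
      - Ω x (lie X Y x) (Z x) + Ω x (lie X Z x) (Y x) - Ω x (lie Y Z x) (X x) = 0

/-- `∇ Ω = 0`: the connection `∇` preserves the 2-form `Ω`. -/
def ConnPreservesForm (nabla : (M → E) → (M → E) → (M → E))
    (Ω : M → (E →ₗ[ℝ] E →ₗ[ℝ] ℝ)) : Prop :=
  ∀ X Y Z, IsSmoothVF E M X → IsSmoothVF E M Y → IsSmoothVF E M Z → ∀ x : M,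
    vact X (fun p => Ω p (Y p) (Z p)) x = Ω x (nabla X Y x) (Z x) + Ω x (Y x) (nabla X Z x)

/-- `L_X ∇ = 0`: `X` is an infinitesimal affine automorphism of `∇`, where
`(L_X∇)(Y,Z) = [X, ∇_Y Z] − ∇_{[X,Y]} Z − ∇_Y [X,Z]`. -/
def LieDerivConnZero (lie nabla : (M → E) → (M → E) → (M → E)) (X : M → E) : Prop :=
  ∀ Y Z, IsSmoothVF E M Y → IsSmoothVF E M Z →
    lie X (nabla Y Z) - nabla (lie X Y) Z - nabla Y (lie X Z) = 0

/-- `L_X Ω = 0`: `X` is a symplectic vector field, where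
`(L_XΩ)(Y,Z) = X(Ω(Y,Z)) − Ω([X,Y],Z) − Ω(Y,[X,Z])`. -/
def LieDerivFormZero (lie : (M → E) → (M → E) → (M → E))
    (Ω : M → (E →ₗ[ℝ] E →ₗ[ℝ] ℝ)) (X : M → E) : Prop :=
  ∀ Y Z, IsSmoothVF E M Y → IsSmoothVF E M Z → ∀ x : M,
    vact X (fun p => Ω p (Y p) (Z p)) x - Ω x (lie X Y x) (Z x) - Ω x (Y x) (lie X Z x) = 0

end

section
variable {E : Type*} [NormedAddCommGroup E] [NormedSpace ℝ E]
  {M : Type*} [TopologicalSpace M] [ChartedSpace E M]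
  [IsManifold 𝓘(ℝ, E) ((⊤ : ℕ∞) : WithTop ℕ∞) M]

/-- The 2-form `d X^♭` evaluated on the pair of vector fields `(Y, Z)`, where
`X^♭ = Ω(X, ·)`. -/
noncomputable def dXflat (lie : (M → E) → (M → E) → (M → E))
    (Ω : M → (E →ₗ[ℝ] E →ₗ[ℝ] ℝ)) (X Y Z : M → E) : M → ℝ :=
  fun x => vact Y (fun p => Ω p (X p) (Z p)) x - vact Z (fun p => Ω p (X p) (Y p)) x
    - Ω x (X x) (lie Y Z x)

end

/-!
Since `∇` is torsion-free and preserves `Ω`, `dX^♭(Y, Z) = Ω(∇_Y X, Z) − Ω(∇_Z X, Y)`, so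
`(∇_W dX^♭)(Y, Z) = Ω(∇²_{W,Y} X, Z) − Ω(∇²_{W,Z} X, Y)`. For an infinitesimal affine
automorphism the second covariant derivative is a curvature term, `∇²_{W,Y} X = R(W, X) Y`,
and `R(W, X)` is skew with respect to every `∇`-parallel 2-form, so the two terms cancel.
-/

section

variable {E : Type*} [NormedAddCommGroup E] [NormedSpace ℝ E]
  {M : Type*} [TopologicalSpace M] [ChartedSpace E M]

theorem vact_add (V : M → E) {f g : M → ℝ} (hf : IsSmoothF E M f) (hg : IsSmoothF E M g)
    (x : M) : vact V (fun p => f p + g p) x = vact V f x + vact V g x := by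
  change vact V (f + g) x = _
  simp only [vact, mfderiv_add (hf.mdifferentiableAt (by simp)) (hg.mdifferentiableAt (by simp))]
  rfl

theorem vact_sub (V : M → E) {f g : M → ℝ} (hf : IsSmoothF E M f) (hg : IsSmoothF E M g)
    (x : M) : vact V (fun p => f p - g p) x = vact V f x - vact V g x := by
  change vact V (f - g) x = _
  simp only [vact, mfderiv_sub (hf.mdifferentiableAt (by simp)) (hg.mdifferentiableAt (by simp))]
  rfl

variable [IsManifold 𝓘(ℝ, E) ((⊤ : ℕ∞) : WithTop ℕ∞) M]
  (lie nabla : (M → E) → (M → E) → (M → E))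

def curvature (A B Y : M → E) : M → E :=
  nabla A (nabla B Y) - nabla B (nabla A Y) - nabla (lie A B) Y

def secondCovDeriv (X W Y : M → E) : M → E :=
  nabla W (nabla Y X) - nabla (nabla W Y) X

variable {lie nabla}

theorem nabla_lie_left (hconn : IsConnection nabla) (hlie : IsLieBracketOp lie)
    (htf : IsTorsionFree lie nabla) {A B Z : M → E}
    (hA : IsSmoothVF E M A) (hB : IsSmoothVF E M B) (hZ : IsSmoothVF E M Z) :
    nabla (lie A B) Z = nabla (nabla A B) Z - nabla (nabla B A) Z := by
  have hsum : lie A B + nabla B A = nabla A B := by rw [← htf A B hA hB]; abel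
  rw [← hsum, hconn.addLeft _ _ _ (hlie A B hA hB).1 (hconn.smooth B A hB hA) hZ]
  abel

theorem nabla_lie_right (hconn : IsConnection nabla) (hlie : IsLieBracketOp lie)
    (htf : IsTorsionFree lie nabla) {Y A B : M → E}
    (hY : IsSmoothVF E M Y) (hA : IsSmoothVF E M A) (hB : IsSmoothVF E M B) :
    nabla Y (lie A B) = nabla Y (nabla A B) - nabla Y (nabla B A) := by
  have hsum : lie A B + nabla B A = nabla A B := by rw [← htf A B hA hB]; abel
  rw [← hsum, hconn.addRight _ _ _ hY (hlie A B hA hB).1 (hconn.smooth B A hB hA)]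
  abel

theorem secondCovDeriv_eq_curvature (hconn : IsConnection nabla) (hlie : IsLieBracketOp lie)
    (htf : IsTorsionFree lie nabla) {X : M → E} (hX : IsSmoothVF E M X)
    (hauto : LieDerivConnZero lie nabla X) {W Y : M → E}
    (hW : IsSmoothVF E M W) (hY : IsSmoothVF E M Y) :
    secondCovDeriv nabla X W Y = curvature lie nabla W X Y := by
  have h := hauto W Y hW hY
  rw [← htf X _ hX (hconn.smooth W Y hW hY), nabla_lie_left hconn hlie htf hX hW hY,
    nabla_lie_right hconn hlie htf hW hX hY] at h
  rw [secondCovDeriv, curvature, nabla_lie_left hconn hlie htf hW hX hY, ← sub_eq_zero, ← h]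
  abel

variable {Ω : M → (E →ₗ[ℝ] E →ₗ[ℝ] ℝ)}

theorem vact_vact_form (hconn : IsConnection nabla) (hpres : ConnPreservesForm nabla Ω)
    (hΩ : ∀ Y Z, IsSmoothVF E M Y → IsSmoothVF E M Z →
      IsSmoothF E M fun x => Ω x (Y x) (Z x))
    {A B Y Z : M → E} (hA : IsSmoothVF E M A) (hB : IsSmoothVF E M B)
    (hY : IsSmoothVF E M Y) (hZ : IsSmoothVF E M Z) (x : M) :
    vact B (vact A fun p => Ω p (Y p) (Z p)) x
      = Ω x (nabla B (nabla A Y) x) (Z x) + Ω x (nabla A Y x) (nabla B Z x)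
        + (Ω x (nabla B Y x) (nabla A Z x) + Ω x (Y x) (nabla B (nabla A Z) x)) := by
  have hAY := hconn.smooth A Y hA hY
  have hAZ := hconn.smooth A Z hA hZ
  rw [funext (hpres A Y Z hA hY hZ), vact_add B (hΩ _ _ hAY hZ) (hΩ _ _ hY hAZ),
    hpres B _ Z hB hAY hZ, hpres B Y _ hB hY hAZ]

theorem form_curvature_add_form_curvature (hconn : IsConnection nabla)
    (hlie : IsLieBracketOp lie) (hpres : ConnPreservesForm nabla Ω)
    (hΩ : ∀ Y Z, IsSmoothVF E M Y → IsSmoothVF E M Z →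
      IsSmoothF E M fun x => Ω x (Y x) (Z x))
    {A B Y Z : M → E} (hA : IsSmoothVF E M A) (hB : IsSmoothVF E M B)
    (hY : IsSmoothVF E M Y) (hZ : IsSmoothVF E M Z) (x : M) :
    Ω x (curvature lie nabla A B Y x) (Z x) + Ω x (Y x) (curvature lie nabla A B Z x) = 0 := by
  have hbracket := congrFun ((hlie A B hA hB).2 _ (hΩ Y Z hY hZ)) x
  rw [hpres _ Y Z (hlie A B hA hB).1 hY hZ x, Pi.sub_apply,
    vact_vact_form hconn hpres hΩ hB hA hY hZ, vact_vact_form hconn hpres hΩ hA hB hY hZ]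
    at hbracket
  simp only [curvature, Pi.sub_apply, map_sub, LinearMap.sub_apply]
  linarith

theorem dXflat_eq (htf : IsTorsionFree lie nabla) (hpres : ConnPreservesForm nabla Ω)
    {X Y Z : M → E} (hX : IsSmoothVF E M X) (hY : IsSmoothVF E M Y) (hZ : IsSmoothVF E M Z) :
    dXflat lie Ω X Y Z = fun x => Ω x (nabla Y X x) (Z x) - Ω x (nabla Z X x) (Y x) := by
  funext x
  have htorsion := congrFun (htf Y Z hY hZ) x
  rw [Pi.sub_apply] at htorsion
  simp only [dXflat, hpres Y X Z hY hX hZ x, hpres Z X Y hZ hX hY x, ← htorsion, map_sub]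
  ring

theorem covDeriv_dXflat_eq (hconn : IsConnection nabla) (htf : IsTorsionFree lie nabla)
    (hpres : ConnPreservesForm nabla Ω)
    (hΩ : ∀ Y Z, IsSmoothVF E M Y → IsSmoothVF E M Z →
      IsSmoothF E M fun x => Ω x (Y x) (Z x))
    {X W Y Z : M → E} (hX : IsSmoothVF E M X) (hW : IsSmoothVF E M W)
    (hY : IsSmoothVF E M Y) (hZ : IsSmoothVF E M Z) (x : M) :
    vact W (dXflat lie Ω X Y Z) x
        - dXflat lie Ω X (nabla W Y) Z x - dXflat lie Ω X Y (nabla W Z) x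
      = Ω x (secondCovDeriv nabla X W Y x) (Z x) - Ω x (secondCovDeriv nabla X W Z x) (Y x) := by
  have hYX := hconn.smooth Y X hY hX
  have hZX := hconn.smooth Z X hZ hX
  rw [dXflat_eq htf hpres hX hY hZ, dXflat_eq htf hpres hX (hconn.smooth W Y hW hY) hZ,
    dXflat_eq htf hpres hX hY (hconn.smooth W Z hW hZ), vact_sub W (hΩ _ _ hYX hZ) (hΩ _ _ hZX hY),
    hpres W _ Z hW hYX hZ x, hpres W _ Y hW hZX hY x]
  simp only [secondCovDeriv, Pi.sub_apply, map_sub, LinearMap.sub_apply]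
  ring

end

theorem stmt5_general
    {E : Type*} [NormedAddCommGroup E] [NormedSpace ℝ E]
    {M : Type*} [TopologicalSpace M] [ChartedSpace E M]
    [IsManifold 𝓘(ℝ, E) ((⊤ : ℕ∞) : WithTop ℕ∞) M]
    (lie : (M → E) → (M → E) → (M → E)) (hlie : IsLieBracketOp lie)
    (Ω : M → (E →ₗ[ℝ] E →ₗ[ℝ] ℝ)) (hΩ : IsSymplecticForm lie Ω)
    (nabla : (M → E) → (M → E) → (M → E)) (hconn : IsConnection nabla)
    (htf : IsTorsionFree lie nabla) (hpres : ConnPreservesForm nabla Ω)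
    (X : M → E) (hX : IsSmoothVF E M X)
    (hauto : LieDerivConnZero lie nabla X) :
    ∀ W Y Z, IsSmoothVF E M W → IsSmoothVF E M Y → IsSmoothVF E M Z → ∀ x : M,
      vact W (dXflat lie Ω X Y Z) x
        - dXflat lie Ω X (nabla W Y) Z x - dXflat lie Ω X Y (nabla W Z) x = 0 := by
  intro W Y Z hW hY hZ x
  rw [covDeriv_dXflat_eq hconn htf hpres hΩ.smooth hX hW hY hZ,
    secondCovDeriv_eq_curvature hconn hlie htf hX hauto hW hY,
    secondCovDeriv_eq_curvature hconn hlie htf hX hauto hW hZ,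
    hΩ.antisymm x _ (Y x), sub_neg_eq_add]
  exact form_curvature_add_form_curvature hconn hlie hpres hΩ.smooth hW hX hY hZ x

theorem stmt5
    {E : Type*} [NormedAddCommGroup E] [NormedSpace ℝ E] [FiniteDimensional ℝ E]
    {M : Type*} [TopologicalSpace M] [ChartedSpace E M] [T2Space M]
    [IsManifold 𝓘(ℝ, E) ((⊤ : ℕ∞) : WithTop ℕ∞) M]
    (lie : (M → E) → (M → E) → (M → E)) (hlie : IsLieBracketOp lie)
    (Ω : M → (E →ₗ[ℝ] E →ₗ[ℝ] ℝ)) (hΩ : IsSymplecticForm lie Ω)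
    (nabla : (M → E) → (M → E) → (M → E)) (hconn : IsConnection nabla)
    (htf : IsTorsionFree lie nabla) (hpres : ConnPreservesForm nabla Ω)
    (X : M → E) (hX : IsSmoothVF E M X)
    (hauto : LieDerivConnZero lie nabla X) :
    ∀ W Y Z, IsSmoothVF E M W → IsSmoothVF E M Y → IsSmoothVF E M Z → ∀ x : M,
      vact W (dXflat lie Ω X Y Z) x
        - dXflat lie Ω X (nabla W Y) Z x - dXflat lie Ω X Y (nabla W Z) x = 0 :=
  stmt5_general lie hlie Ω hΩ nabla hconn htf hpres X hX hauto
end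

section
/- Let g be the 4-dimensional real Lie algebra with basis E₁, E₂, E₃, E₄ whose only nonzero bracket among basis elements is [E₂, E₄] = −E₁, and for β ∈ ℝ let ∇ be the bilinear map g × g → g with ∇_{E₄}E₂ = −(β − 2/3)E₁, ∇_{E₂}E₄ = −(β + 1/3)E₁, ∇_{E₂}E₂ = −(β + 1/3)E₃, and all other covariant derivatives of basis elements zero. Then ∇ is flat: ∇_X(∇_Y Z) − ∇_Y(∇_X Z) − ∇_{[X,Y]}Z = 0 for all X, Y, Z ∈ g. -/
/-!
Every term of the curvature vanishes on its own. The subspace `V = span {E₁, E₃}` contains all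
values of `∇` and all brackets, and `∇` kills `V` in either slot: `∇_X V = 0` and `∇_V = 0`.
Hence `∇_X ∇_Y Z = 0` because `∇_Y Z ∈ V`, and `∇_{[X,Y]} = 0` because `[X,Y] ∈ V`.
-/

section

variable {R L M N P : Type*} [CommRing R]

theorem LinearMap.apply_mem_of_basis [AddCommGroup M] [AddCommGroup N] [AddCommGroup P]
    [Module R M] [Module R N] [Module R P] {ι κ : Type*} (b : Module.Basis ι R M)
    (c : Module.Basis κ R N) (f : M →ₗ[R] N →ₗ[R] P) (V : Submodule R P)
    (h : ∀ i j, f (b i) (c j) ∈ V) (x : M) (y : N) : f x y ∈ V := by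
  have hle : Submodule.map₂ f ⊤ ⊤ ≤ V := by
    rw [← b.span_eq, ← c.span_eq, Submodule.map₂_span_span, Submodule.span_le]
    rintro _ ⟨_, ⟨i, rfl⟩, _, ⟨j, rfl⟩, rfl⟩
    exact h i j
  exact hle (Submodule.apply_mem_map₂ f Submodule.mem_top Submodule.mem_top)

variable [LieRing L] [LieAlgebra R L]

def IsFlat (nabla : L →ₗ[R] L →ₗ[R] L) : Prop :=
  ∀ X Y Z : L, nabla X (nabla Y Z) - nabla Y (nabla X Z) - nabla ⁅X, Y⁆ Z = 0

theorem IsFlat.of_submodule (nabla : L →ₗ[R] L →ₗ[R] L) (V : Submodule R L)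
    (hmaps : ∀ X Y, nabla X Y ∈ V) (hbracket : ∀ X Y : L, ⁅X, Y⁆ ∈ V)
    (hleft : V ≤ LinearMap.ker nabla) (hright : V ≤ LinearMap.ker nabla.flip) :
    IsFlat nabla := by
  have hvanish : ∀ X, ∀ v ∈ V, nabla X v = 0 := fun X v hv =>
    LinearMap.congr_fun (LinearMap.mem_ker.mp (hright hv)) X
  intro X Y Z
  rw [hvanish X _ (hmaps Y Z), hvanish Y _ (hmaps X Z),
    LinearMap.mem_ker.mp (hleft (hbracket X Y))]
  simp

end

theorem stmt14
    (g : Type*) [LieRing g] [LieAlgebra ℝ g]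
    -- `E 0, E 1, E 2, E 3` is the basis `E₁, E₂, E₃, E₄`; the only nonzero bracket
    -- among basis elements is `⁅E₂, E₄⁆ = −E₁`
    (E : Module.Basis (Fin 4) ℝ g)
    (hbracket : ∀ i j : Fin 4, ⁅E i, E j⁆ =
      if i = 1 ∧ j = 3 then -(E 0) else if i = 3 ∧ j = 1 then E 0 else 0)
    (β : ℝ) (nabla : g →ₗ[ℝ] g →ₗ[ℝ] g)
    -- `∇_{E₄}E₂ = −(β − 2/3)E₁`, `∇_{E₂}E₄ = −(β + 1/3)E₁`, `∇_{E₂}E₂ = −(β + 1/3)E₃`,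
    -- and all other covariant derivatives of basis elements vanish
    (h42 : nabla (E 3) (E 1) = (-(β - 2/3)) • E 0)
    (h24 : nabla (E 1) (E 3) = (-(β + 1/3)) • E 0)
    (h22 : nabla (E 1) (E 1) = (-(β + 1/3)) • E 2)
    (hother : ∀ i j : Fin 4,
      ¬((i = 3 ∧ j = 1) ∨ (i = 1 ∧ j = 3) ∨ (i = 1 ∧ j = 1)) → nabla (E i) (E j) = 0) :
    ∀ X Y Z : g, nabla X (nabla Y Z) - nabla Y (nabla X Z) - nabla ⁅X, Y⁆ Z = 0 := by
  let V := Submodule.span ℝ {E 0, E 2}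
  have hE0 : E 0 ∈ V := Submodule.subset_span (by simp)
  have hE2 : E 2 ∈ V := Submodule.subset_span (by simp)
  have hnabla_mem (i j : Fin 4) : nabla (E i) (E j) ∈ V := by
    by_cases hij : (i = 3 ∧ j = 1) ∨ (i = 1 ∧ j = 3) ∨ (i = 1 ∧ j = 1)
    · rcases hij with ⟨rfl, rfl⟩ | ⟨rfl, rfl⟩ | ⟨rfl, rfl⟩
      · exact h42 ▸ V.smul_mem _ hE0
      · exact h24 ▸ V.smul_mem _ hE0
      · exact h22 ▸ V.smul_mem _ hE2
    · exact hother i j hij ▸ V.zero_mem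
  have hbracket_mem (i j : Fin 4) : ⁅E i, E j⁆ ∈ V := by
    rw [hbracket]
    split_ifs
    exacts [V.neg_mem hE0, hE0, V.zero_mem]
  refine IsFlat.of_submodule nabla V (nabla.apply_mem_of_basis E E V hnabla_mem)
    ((LieModule.toEnd ℝ g g : g →ₗ[ℝ] Module.End ℝ g).apply_mem_of_basis E E V hbracket_mem)
    (Submodule.span_le.mpr (Set.pair_subset ?_ ?_)) (Submodule.span_le.mpr (Set.pair_subset ?_ ?_))
  all_goals
    refine LinearMap.mem_ker.mpr (E.ext fun k => ?_)
    simpa using hother _ _ (by simp)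
end

section
/- Let g be the 4-dimensional real Lie algebra with basis E₁, E₂, E₃, E₄ whose only nonzero bracket among basis elements is [E₂, E₄] = −E₁, and for β ∈ ℝ let ∇ be the bilinear map g × g → g with ∇_{E₄}E₂ = −(β − 2/3)E₁, ∇_{E₂}E₄ = −(β + 1/3)E₁, ∇_{E₂}E₂ = −(β + 1/3)E₃, and all other covariant derivatives of basis elements zero. Then every X ∈ g is an infinitesimal affine automorphism of ∇: for all X, Y, Z ∈ g, [X, ∇_Y Z] − ∇_{[X,Y]}Z − ∇_Y([X,Z]) = 0. -/
/-!
Each of the three terms vanishes separately. All values of `∇` lie in `span {E₁, E₃}`,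
which is central, so `⁅X, ∇_Y Z⁆ = 0`; and every bracket is a multiple of `E₁`, which `∇`
kills in either slot, so `∇_{⁅X,Y⁆} Z = ∇_Y ⁅X,Z⁆ = 0`.
-/

open Submodule LieAlgebra

theorem LinearMap.apply_apply_mem_of_basis {ι κ R M N P : Type*} [CommRing R]
    [AddCommGroup M] [AddCommGroup N] [AddCommGroup P] [Module R M] [Module R N] [Module R P]
    (b : Module.Basis ι R M) (c : Module.Basis κ R N) (B : M →ₗ[R] N →ₗ[R] P)
    {p : Submodule R P} (h : ∀ i j, B (b i) (c j) ∈ p) (x : M) (y : N) : B x y ∈ p := by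
  have hmap : map₂ B ⊤ ⊤ ≤ p := by
    rw [← b.span_eq, ← c.span_eq, map₂_span_span, span_le]
    rintro _ ⟨_, ⟨i, rfl⟩, _, ⟨j, rfl⟩, rfl⟩
    exact h i j
  exact hmap (apply_mem_map₂ B mem_top mem_top)

theorem LieModule.mem_maxTrivSubmodule_of_basis {ι R L M : Type*} [CommRing R] [LieRing L]
    [LieAlgebra R L] [AddCommGroup M] [Module R M] [LieRingModule L M] [LieModule R L M]
    (b : Module.Basis ι R L) {m : M} (h : ∀ i, ⁅b i, m⁆ = 0) :
    m ∈ LieModule.maxTrivSubmodule R L M := by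
  have hm : (LieModule.toEnd R L M : L →ₗ[R] Module.End R M).flip m = 0 :=
    b.ext fun i => by simpa using h i
  exact (LieModule.mem_maxTrivSubmodule R L M m).2 fun x => by
    simpa using LinearMap.congr_fun hm x

theorem lie_apply_sub_apply_lie_sub_apply_lie_eq_zero {R L : Type*} [CommRing R] [LieRing L]
    [LieAlgebra R L] (nabla : L →ₗ[R] L →ₗ[R] L) (v : L)
    (hval : ∀ Y Z, nabla Y Z ∈ center R L) (hlie : ∀ X Y : L, ⁅X, Y⁆ ∈ R ∙ v)
    (hleft : nabla v = 0) (hright : nabla.flip v = 0) (X Y Z : L) :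
    ⁅X, nabla Y Z⁆ - nabla ⁅X, Y⁆ Z - nabla Y ⁅X, Z⁆ = 0 := by
  obtain ⟨a, ha⟩ := mem_span_singleton.1 (hlie X Y)
  obtain ⟨b, hb⟩ := mem_span_singleton.1 (hlie X Z)
  have h₁ : ⁅X, nabla Y Z⁆ = 0 := (LieModule.mem_maxTrivSubmodule R L L _).1 (hval Y Z) X
  have h₂ : nabla ⁅X, Y⁆ Z = 0 := by rw [← ha, map_smul, hleft]; simp
  have h₃ : nabla Y ⁅X, Z⁆ = 0 := by rw [← hb, map_smul, ← nabla.flip_apply, hright]; simp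
  rw [h₁, h₂, h₃, sub_zero, sub_zero]

theorem stmt15
    (g : Type*) [LieRing g] [LieAlgebra ℝ g]
    -- `E 0, E 1, E 2, E 3` is the basis `E₁, E₂, E₃, E₄`; the only nonzero bracket
    -- among basis elements is `⁅E₂, E₄⁆ = −E₁`
    (E : Module.Basis (Fin 4) ℝ g)
    (hbracket : ∀ i j : Fin 4, ⁅E i, E j⁆ =
      if i = 1 ∧ j = 3 then -(E 0) else if i = 3 ∧ j = 1 then E 0 else 0)
    (β : ℝ) (nabla : g →ₗ[ℝ] g →ₗ[ℝ] g)
    -- `∇_{E₄}E₂ = −(β − 2/3)E₁`, `∇_{E₂}E₄ = −(β + 1/3)E₁`, `∇_{E₂}E₂ = −(β + 1/3)E₃`,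
    -- and all other covariant derivatives of basis elements vanish
    (h42 : nabla (E 3) (E 1) = (-(β - 2/3)) • E 0)
    (h24 : nabla (E 1) (E 3) = (-(β + 1/3)) • E 0)
    (h22 : nabla (E 1) (E 1) = (-(β + 1/3)) • E 2)
    (hother : ∀ i j : Fin 4,
      ¬((i = 3 ∧ j = 1) ∨ (i = 1 ∧ j = 3) ∨ (i = 1 ∧ j = 1)) → nabla (E i) (E j) = 0) :
    ∀ X Y Z : g, ⁅X, nabla Y Z⁆ - nabla ⁅X, Y⁆ Z - nabla Y ⁅X, Z⁆ = 0 := by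
  have hcenter : span ℝ {E 0, E 2} ≤ (center ℝ g).toSubmodule := by
    refine span_le.2 fun v hv => LieModule.mem_maxTrivSubmodule_of_basis E fun i => ?_
    rcases hv with rfl | rfl <;> simp [hbracket]
  have hval : ∀ Y Z, nabla Y Z ∈ span ℝ {E 0, E 2} := by
    refine LinearMap.apply_apply_mem_of_basis E E nabla fun i j => ?_
    fin_cases i <;> fin_cases j <;> simp [h42, h24, h22, hother]
    all_goals exact smul_mem _ _ (subset_span (by simp))
  have hlie : ∀ X Y : g, ⁅X, Y⁆ ∈ ℝ ∙ E 0 := by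
    refine LinearMap.apply_apply_mem_of_basis E E (ad ℝ g : g →ₗ[ℝ] Module.End ℝ g)
      fun i j => ?_
    simp only [LieHom.coe_toLinearMap, ad_apply, hbracket]
    split_ifs <;> simp [mem_span_singleton_self]
  exact lie_apply_sub_apply_lie_sub_apply_lie_eq_zero nabla (E 0)
    (fun Y Z => hcenter (hval Y Z)) hlie (E.ext fun k => hother 0 k (by simp))
    (E.ext fun k => hother k 0 (by simp))
end
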